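/- Let E be a Banach lattice, μ a locally finite Borel measure on ℝ^d, D a finite collection of dyadic cubes, and f: ℝ^d → E a positive locally integrable function. Assume K := ‖M̃^μ_D‖_{L^1(μ;E) → L^{1,∞}(μ;E)} < ∞. For S ∈ D let ch_S(S) be the collection of maximal cubes S' ∈ D with S' ⊊ S satisfying ‖sup_{Q ∈ D, S' ⊆ Q ⊆ S} ⟨f⟩^μ_Q‖_E > 2K ⟨‖f‖_E⟩^μ_S; let S_0 be the maximal cubes of D, S_{k+1} := ∪_{S ∈ S_k} ch_S(S), and S := ∪_{k≥0} S_k. Then S is sparse: for every S ∈ S, the set E_S := S \ ∪_{S' ∈ ch_S(S)} S' satisfies μ(E_S) ≥ (1/2)μ(S), and the sets {E_S}_{S ∈ S} are pairwise disjoint. -/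

import Mathlib

open MeasureTheory ENNReal Set

attribute [local instance] Classical.propDecidable

/-- A dyadic cube in `ℝ^d`, given by a generation `k : ℤ` and a position `m : Fin d → ℤ`;
its underlying set is `∏_i [2^k m i, 2^k (m i + 1))`. -/
structure DyadicCube (d : ℕ) where
  k : ℤ
  m : Fin d → ℤ
deriving DecidableEq

/-- The underlying set of a dyadic cube. -/
def DyadicCube.set {d : ℕ} (Q : DyadicCube d) : Set (Fin d → ℝ) :=
  {x | ∀ i, (2 : ℝ) ^ Q.k * Q.m i ≤ x i ∧ x i < (2 : ℝ) ^ Q.k * (Q.m i + 1)}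

/-- A (non-dyadic) axis-parallel cube in `ℝ^d`, given by its corner and side length. -/
structure Cube (d : ℕ) where
  c : Fin d → ℝ
  len : ℝ
  len_pos : 0 < len

/-- The underlying set of an axis-parallel cube. -/
def Cube.set {d : ℕ} (Q : Cube d) : Set (Fin d → ℝ) :=
  {x | ∀ i, Q.c i ≤ x i ∧ x i < Q.c i + Q.len}

/-- The average `⟨f⟩^μ_A = (1/μ(A)) ∫_A f dμ` of a vector-valued function. -/
noncomputable def avg {d : ℕ} {E : Type*} [NormedAddCommGroup E] [NormedSpace ℝ E]
    (μ : Measure (Fin d → ℝ)) (A : Set (Fin d → ℝ)) (f : (Fin d → ℝ) → E) : E :=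
  (μ A).toReal⁻¹ • ∫ x in A, f x ∂μ

/-- The dyadic lattice Hardy–Littlewood maximal operator
`M̃^μ_D f (x) = sup_{Q ∈ D} ⟨|f|⟩^μ_Q 1_Q(x)` (a lattice supremum of finitely many
positive elements, realized as a fold of `⊔` with base point `0`). -/
noncomputable def dyadicMaximal {d : ℕ} {E : Type*} [NormedAddCommGroup E] [Lattice E] [HasSolidNorm E] [IsOrderedAddMonoid E]
    [NormedSpace ℝ E] (μ : Measure (Fin d → ℝ)) (D : Finset (DyadicCube d))
    (f : (Fin d → ℝ) → E) (x : Fin d → ℝ) : E :=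
  D.fold (· ⊔ ·) 0 fun Q => Set.indicator Q.set (fun _ => avg μ Q.set fun y => |f y|) x

/-- A collection of dyadic cubes is sparse (w.r.t. `μ`): each `Q` in the collection carries a
measurable subset `E_Q ⊆ Q` with `μ(Q) ≤ 2 μ(E_Q)`, the subsets being pairwise disjoint. -/
def IsSparse {d : ℕ} (μ : Measure (Fin d → ℝ)) (S : Finset (DyadicCube d)) : Prop :=
  ∃ ES : DyadicCube d → Set (Fin d → ℝ),
    (∀ Q ∈ S, ES Q ⊆ Q.set ∧ MeasurableSet (ES Q) ∧ μ Q.set ≤ 2 * μ (ES Q)) ∧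
    (S : Set (DyadicCube d)).Pairwise fun Q Q' => Disjoint (ES Q) (ES Q')

/-- The sparse operator `A^μ_{q,S} f (x) = (∑_{Q ∈ S} ⟨|f|⟩_Q^q 1_Q(x))^{1/q}` acting on
scalar-valued functions. -/
noncomputable def sparseOp {d : ℕ} (μ : Measure (Fin d → ℝ)) (q : ℝ)
    (S : Finset (DyadicCube d)) (f : (Fin d → ℝ) → ℝ) (x : Fin d → ℝ) : ℝ :=
  (∑ Q ∈ S, Set.indicator Q.set (fun _ => avg μ Q.set (fun y => |f y|) ^ q) x) ^ (1 / q)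

/-- `q`-convexity of a Banach lattice with constant `C`:
`‖(∑ |e k|^q)^{1/q}‖ ≤ C (∑ ‖e k‖^q)^{1/q}`. The Krivine element `(∑ |e k|^q)^{1/q}` is
characterized as the least upper bound of all combinations `∑ a k • |e k|` where the
nonnegative coefficients `a` lie in the unit ball of the norm dual to the `ℓ^q`-norm. -/
def IsQConvexWith (E : Type*) [NormedAddCommGroup E] [Lattice E] [HasSolidNorm E] [IsOrderedAddMonoid E] [NormedSpace ℝ E]
    (q C : ℝ) : Prop :=
  ∀ (n : ℕ) (e : Fin n → E) (s : E),
    IsLUB {x : E | ∃ a : Fin n → ℝ, (∀ k, 0 ≤ a k) ∧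
        (∀ t : Fin n → ℝ, (∀ k, 0 ≤ t k) → ∑ k, a k * t k ≤ (∑ k, t k ^ q) ^ (1 / q)) ∧
        x = ∑ k, a k • |e k|} s →
    ‖s‖ ≤ C * (∑ k, ‖e k‖ ^ q) ^ (1 / q)

/-- The Hardy–Littlewood property of a Banach lattice `E`: for some `p ∈ (1,∞)` the dyadic
lattice maximal operators (w.r.t. Lebesgue measure) are bounded on `L^p(dx; E)` uniformly in
the finite collection of dyadic cubes. -/
def HasHLProperty (d : ℕ) (E : Type*) [NormedAddCommGroup E] [Lattice E] [HasSolidNorm E] [IsOrderedAddMonoid E] [NormedSpace ℝ E] : Prop :=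
  ∃ p : ℝ, 1 < p ∧ ∃ C : ℝ, ∀ (D : Finset (DyadicCube d)) (f : (Fin d → ℝ) → E),
    MemLp f (ENNReal.ofReal p) volume →
    eLpNorm (dyadicMaximal volume D f) (ENNReal.ofReal p) volume ≤
      ENNReal.ofReal C * eLpNorm f (ENNReal.ofReal p) volume

/-- Order continuity of a Banach lattice: every downward directed set with infimum `0`
contains elements of arbitrarily small norm cofinally (i.e. the corresponding decreasing net
converges to `0` in norm). -/
def IsOrderContinuous (E : Type*) [NormedAddCommGroup E] [Lattice E] [HasSolidNorm E] [IsOrderedAddMonoid E] : Prop :=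
  ∀ A : Set E, A.Nonempty → DirectedOn (· ≥ ·) A → IsGLB A 0 →
    ∀ ε : ℝ, 0 < ε → ∃ a ∈ A, ∀ b ∈ A, b ≤ a → ‖b‖ < ε
/-- The Lebesgue average of `g` over `A`, valued in `ℝ≥0∞`. -/
noncomputable def scalarCubeAvg {d : ℕ} (A : Set (Fin d → ℝ)) (g : (Fin d → ℝ) → ℝ) : ℝ≥0∞ :=
  (volume A)⁻¹ * ∫⁻ x in A, ENNReal.ofReal (g x)

/-- The scalar (non-dyadic) Hardy–Littlewood maximal function, valued in `ℝ≥0∞`. -/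
noncomputable def scalarMaximal {d : ℕ} (g : (Fin d → ℝ) → ℝ) (x : Fin d → ℝ) : ℝ≥0∞ :=
  ⨆ (Q : Cube d) (_ : x ∈ Q.set), scalarCubeAvg Q.set fun y => |g y|

/-- The Muckenhoupt `A_p`-characteristic `[w]_{A_p} = sup_Q ⟨w⟩_Q ⟨w^{-1/(p-1)}⟩_Q^{p-1}`. -/
noncomputable def ApConst (d : ℕ) (p : ℝ) (w : (Fin d → ℝ) → ℝ) : ℝ≥0∞ :=
  ⨆ Q : Cube d,
    scalarCubeAvg Q.set w * scalarCubeAvg Q.set (fun x => w x ^ (-(1 / (p - 1)))) ^ (p - 1)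

/-- The Fujii–Wilson `A_∞`-characteristic `[w]_{A_∞} = sup_Q (∫_Q M(w 1_Q))/(∫_Q w)`. -/
noncomputable def AinfConst (d : ℕ) (w : (Fin d → ℝ) → ℝ) : ℝ≥0∞ :=
  ⨆ Q : Cube d, (∫⁻ x in Q.set, scalarMaximal (Q.set.indicator w) x) /
    ∫⁻ x in Q.set, ENNReal.ofReal (w x)

/-- The `A_1`-characteristic `[w]_{A_1} = sup_Q ⟨w⟩_Q ‖w⁻¹‖_{L^∞(Q)}`. -/
noncomputable def A1Const (d : ℕ) (w : (Fin d → ℝ) → ℝ) : ℝ≥0∞ :=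
  ⨆ Q : Cube d, scalarCubeAvg Q.set w *
    essSup (fun x => ENNReal.ofReal (w x)⁻¹) (volume.restrict Q.set)

/-- The measure `w dx` associated with a weight `w`. -/
noncomputable def wMeasure {d : ℕ} (w : (Fin d → ℝ) → ℝ) : Measure (Fin d → ℝ) :=
  volume.withDensity fun x => ENNReal.ofReal (w x)

/-- `g` is (a representative of) the non-dyadic lattice Hardy–Littlewood maximal function
`M̃f = sup_Q ⟨|f|⟩_Q 1_Q` (w.r.t. Lebesgue measure): `g` is strongly measurable and is the
least upper bound, in the almost-everywhere order of `L^0(dx; E)`, of the family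
`x ↦ ⟨|f|⟩_Q 1_Q(x)` indexed by all axis-parallel cubes `Q`. -/
def IsLatticeMaximalFn {d : ℕ} {E : Type*} [NormedAddCommGroup E] [Lattice E] [HasSolidNorm E] [IsOrderedAddMonoid E] [NormedSpace ℝ E]
    (f g : (Fin d → ℝ) → E) : Prop :=
  AEStronglyMeasurable g (volume : Measure (Fin d → ℝ)) ∧
  (∀ Q : Cube d, ∀ᵐ x ∂(volume : Measure (Fin d → ℝ)),
    Set.indicator Q.set (fun _ => avg volume Q.set fun y => |f y|) x ≤ g x) ∧
  ∀ h : (Fin d → ℝ) → E, AEStronglyMeasurable h (volume : Measure (Fin d → ℝ)) →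
    (∀ Q : Cube d, ∀ᵐ x ∂(volume : Measure (Fin d → ℝ)),
      Set.indicator Q.set (fun _ => avg volume Q.set fun y => |f y|) x ≤ h x) →
    ∀ᵐ x ∂(volume : Measure (Fin d → ℝ)), g x ≤ h x

/-- The lattice supremum `sup_{Q ∈ D, P Q} ⟨f⟩^μ_Q` (fold of `⊔` with base point `0`). -/
noncomputable def supAvgOver {d : ℕ} {E : Type*} [NormedAddCommGroup E] [Lattice E] [HasSolidNorm E] [IsOrderedAddMonoid E]
    [NormedSpace ℝ E] (μ : Measure (Fin d → ℝ)) (D : Finset (DyadicCube d))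
    (f : (Fin d → ℝ) → E) (P : DyadicCube d → Prop) : E :=
  (D.filter P).fold (· ⊔ ·) 0 fun Q => avg μ Q.set f

/-- The Muckenhoupt–Wheeden type stopping condition:
`‖sup_{Q ∈ D, S' ⊆ Q ⊆ S} ⟨f⟩^μ_Q‖ > 2 K ⟨‖f‖⟩^μ_S`. -/
def StopCond {d : ℕ} {E : Type*} [NormedAddCommGroup E] [Lattice E] [HasSolidNorm E] [IsOrderedAddMonoid E] [NormedSpace ℝ E]
    (μ : Measure (Fin d → ℝ)) (D : Finset (DyadicCube d)) (f : (Fin d → ℝ) → E) (K : ℝ)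
    (S' S : DyadicCube d) : Prop :=
  2 * K * avg μ S.set (fun y => ‖f y‖) <
    ‖supAvgOver μ D f fun Q => S'.set ⊆ Q.set ∧ Q.set ⊆ S.set‖

/-- The stopping children of `S`: maximal cubes `S' ∈ D`, `S' ⊊ S`, satisfying the stopping
condition. -/
noncomputable def stopChildren {d : ℕ} {E : Type*} [NormedAddCommGroup E] [Lattice E] [HasSolidNorm E] [IsOrderedAddMonoid E]
    [NormedSpace ℝ E] (μ : Measure (Fin d → ℝ)) (D : Finset (DyadicCube d))
    (f : (Fin d → ℝ) → E) (K : ℝ) (S : DyadicCube d) : Finset (DyadicCube d) :=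
  D.filter fun S' => S'.set ⊂ S.set ∧ StopCond μ D f K S' S ∧
    ∀ S'' ∈ D, S''.set ⊂ S.set → StopCond μ D f K S'' S → S'.set ⊆ S''.set → S'' = S'

/-- The generations of stopping cubes: generation `0` consists of the maximal cubes of `D`,
and generation `k+1` consists of the stopping children of the cubes of generation `k`. -/
noncomputable def stopLayer {d : ℕ} {E : Type*} [NormedAddCommGroup E] [Lattice E] [HasSolidNorm E] [IsOrderedAddMonoid E]
    [NormedSpace ℝ E] (μ : Measure (Fin d → ℝ)) (D : Finset (DyadicCube d))
    (f : (Fin d → ℝ) → E) (K : ℝ) : ℕ → Finset (DyadicCube d)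
  | 0 => D.filter fun Q => ∀ Q' ∈ D, Q.set ⊆ Q'.set → Q'.set ⊆ Q.set
  | k + 1 => (stopLayer μ D f K k).biUnion (stopChildren μ D f K)

/-- The family of stopping cubes `𝒮 = ⋃_k 𝒮_k`. -/
noncomputable def stopFamily {d : ℕ} {E : Type*} [NormedAddCommGroup E] [Lattice E] [HasSolidNorm E] [IsOrderedAddMonoid E]
    [NormedSpace ℝ E] (μ : Measure (Fin d → ℝ)) (D : Finset (DyadicCube d))
    (f : (Fin d → ℝ) → E) (K : ℝ) : Finset (DyadicCube d) :=
  D.filter fun Q => ∃ k, Q ∈ stopLayer μ D f K k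

/-- `S` is the stopping parent of `Q` w.r.t. the family `𝒮`: the minimal cube of `𝒮`
containing `Q`. -/
def IsStopParent {d : ℕ} (𝒮 : Finset (DyadicCube d)) (Q S : DyadicCube d) : Prop :=
  S ∈ 𝒮 ∧ Q.set ⊆ S.set ∧ ∀ S' ∈ 𝒮, Q.set ⊆ S'.set → S.set ⊆ S'.set

/-- The lattice supremum `sup_{Q ∈ D, P Q} ⟨f⟩^μ_Q 1_Q(x)`. -/
noncomputable def supIndAvgOver {d : ℕ} {E : Type*} [NormedAddCommGroup E] [Lattice E] [HasSolidNorm E] [IsOrderedAddMonoid E]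
    [NormedSpace ℝ E] (μ : Measure (Fin d → ℝ)) (D : Finset (DyadicCube d))
    (f : (Fin d → ℝ) → E) (P : DyadicCube d → Prop) (x : Fin d → ℝ) : E :=
  (D.filter P).fold (· ⊔ ·) 0 fun Q => Set.indicator Q.set (fun _ => avg μ Q.set f) x

/-!
Fix a stopping cube `S` and put `λ = 2K⟨‖f‖⟩^μ_S`. At a point `x` of a stopping child `S'`, the
stopping condition bounds `λ` by the norm of `sup_{S' ⊆ Q ⊆ S} ⟨f⟩^μ_Q`; since `f ≥ 0` this
supremum is dominated in the lattice by `M̃^μ_D (1_S f)(x)`, and the norm is solid. So the children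
of `S` lie in `{‖M̃^μ_D (1_S f)‖ > λ}`, which by the weak-type bound has measure at most
`K ‖1_S f‖_1 / λ = μ(S)/2`; hence `μ(E_S) ≥ μ(S)/2`.

By dyadic nesting and the maximality of stopping children, every stopping cube strictly inside `S`
is contained in a stopping child of `S`, hence misses `E_S`: the sets `E_S` are disjoint.
-/

namespace Finset

variable {α β : Type*} [SemilatticeSup β] {s : Finset α} {g : α → β} {b c : β}

theorem fold_sup_le_iff : s.fold (· ⊔ · : β → β → β) b g ≤ c ↔ b ≤ c ∧ ∀ a ∈ s, g a ≤ c :=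
  fold_op_rel_iff_and (r := fun x y => y ≤ x) sup_le_iff

theorem le_fold_sup : b ≤ s.fold (· ⊔ · : β → β → β) b g :=
  (fold_sup_le_iff.1 le_rfl).1

theorem le_fold_sup_of_mem {a : α} (ha : a ∈ s) : g a ≤ s.fold (· ⊔ · : β → β → β) b g :=
  (fold_sup_le_iff.1 le_rfl).2 a ha

end Finset

theorem Finset.card_filter_lt_lt_card_filter_lt {ι α : Type*} [PartialOrder α] {s : Finset ι}
    {F : ι → α} {i j : ι} (hj : j ∈ s) (hij : F i < F j) :
    (s.filter fun l => F j < F l).card < (s.filter fun l => F i < F l).card := by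
  refine Finset.card_lt_card (Finset.ssubset_iff_of_subset ?_ |>.2 ⟨j, ?_, ?_⟩)
  · exact Finset.monotone_filter_right s fun _ _ => hij.trans
  · exact Finset.mem_filter.2 ⟨hj, hij⟩
  · simp

theorem Int.floor_div_two_zpow_of_le {k l : ℤ} (hkl : k ≤ l) (a : ℝ) :
    ⌊a / 2 ^ l⌋ = ⌊a / 2 ^ k⌋ / 2 ^ (l - k).toNat := by
  have h : (2 : ℝ) ^ l = 2 ^ k * ((2 ^ (l - k).toNat : ℕ) : ℝ) := by
    rw [Nat.cast_pow, Nat.cast_ofNat, ← zpow_natCast, Int.toNat_of_nonneg (by omega),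
      ← zpow_add₀ two_ne_zero, add_sub_cancel]
  rw [h, ← div_div, Int.floor_div_natCast]
  norm_cast

namespace DyadicCube

variable {d : ℕ}

theorem set_eq_pi (Q : DyadicCube d) :
    Q.set = univ.pi fun i => Ico ((2 : ℝ) ^ Q.k * Q.m i) (2 ^ Q.k * (Q.m i + 1)) := by
  ext x
  simp [DyadicCube.set]

theorem mem_set_iff {Q : DyadicCube d} {x : Fin d → ℝ} :
    x ∈ Q.set ↔ ∀ i, ⌊x i / 2 ^ Q.k⌋ = Q.m i := by
  have h2 : (0 : ℝ) < 2 ^ Q.k := zpow_pos two_pos _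
  simp only [Int.floor_eq_iff, le_div_iff₀ h2, div_lt_iff₀ h2, mul_comm _ ((2 : ℝ) ^ Q.k)]
  rfl

theorem measurableSet_set (Q : DyadicCube d) : MeasurableSet Q.set := by
  rw [set_eq_pi]
  exact MeasurableSet.univ_pi fun _ => measurableSet_Ico

theorem set_nonempty (Q : DyadicCube d) : Q.set.Nonempty := by
  rw [set_eq_pi, univ_pi_nonempty_iff]
  exact fun i => nonempty_Ico.2 (mul_lt_mul_of_pos_left (lt_add_one _) (zpow_pos two_pos _))

theorem isBounded_set (Q : DyadicCube d) : Bornology.IsBounded Q.set := by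
  rw [set_eq_pi]
  exact Bornology.IsBounded.pi fun _ => Metric.isBounded_Ico _ _

theorem measure_set_lt_top (Q : DyadicCube d) (μ : Measure (Fin d → ℝ))
    [IsLocallyFiniteMeasure μ] : μ Q.set < ⊤ :=
  Q.isBounded_set.measure_lt_top

theorem set_subset_of_k_le {Q Q' : DyadicCube d} (hk : Q.k ≤ Q'.k)
    (h : (Q.set ∩ Q'.set).Nonempty) : Q.set ⊆ Q'.set := by
  obtain ⟨x, hxQ, hxQ'⟩ := h
  intro y hy
  rw [mem_set_iff] at hxQ hxQ' hy ⊢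
  intro i
  rw [Int.floor_div_two_zpow_of_le hk, hy, ← hxQ, ← Int.floor_div_two_zpow_of_le hk, hxQ']

theorem set_subset_or_subset {Q Q' : DyadicCube d} (h : (Q.set ∩ Q'.set).Nonempty) :
    Q.set ⊆ Q'.set ∨ Q'.set ⊆ Q.set := by
  rcases le_total Q.k Q'.k with hk | hk
  · exact Or.inl (set_subset_of_k_le hk h)
  · exact Or.inr (set_subset_of_k_le hk (inter_comm Q.set _ ▸ h))

theorem set_injective [NeZero d] : Function.Injective (DyadicCube.set (d := d)) := by
  intro Q Q' h
  have hends (i : Fin d) : (2 : ℝ) ^ Q.k * Q.m i = 2 ^ Q'.k * Q'.m i ∧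
      (2 : ℝ) ^ Q.k * (Q.m i + 1) = 2 ^ Q'.k * (Q'.m i + 1) := by
    have hne := Q.set_nonempty
    rw [set_eq_pi] at hne h
    rw [set_eq_pi] at h
    refine (Ico_eq_Ico_iff (Or.inl ?_)).1 ?_
    · exact mul_lt_mul_of_pos_left (lt_add_one _) (zpow_pos two_pos _)
    · rw [← eval_image_univ_pi hne, h, eval_image_univ_pi (h ▸ hne)]
  have hk : Q.k = Q'.k := by
    obtain ⟨h₁, h₂⟩ := hends 0
    exact zpow_right_injective₀ two_pos (by norm_num : (2 : ℝ) ≠ 1) (by linear_combination h₂ - h₁)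
  have hm : Q.m = Q'.m := funext fun i => by
    have h₁ := (hends i).1
    rw [hk] at h₁
    exact_mod_cast mul_left_cancel₀ (zpow_pos two_pos Q'.k).ne' h₁
  cases Q; cases Q'
  simp_all

end DyadicCube

section Stopping

variable {d : ℕ} {E : Type*} [NormedAddCommGroup E] [Lattice E] [HasSolidNorm E]
  [IsOrderedAddMonoid E] [NormedSpace ℝ E] {μ : Measure (Fin d → ℝ)} {D : Finset (DyadicCube d)}
  {f : (Fin d → ℝ) → E} {K : ℝ}

theorem mem_stopChildren_iff {S S' : DyadicCube d} :
    S' ∈ stopChildren μ D f K S ↔ S' ∈ D ∧ S'.set ⊂ S.set ∧ StopCond μ D f K S' S ∧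
    ∀ S'' ∈ D, S''.set ⊂ S.set → StopCond μ D f K S'' S → S'.set ⊆ S''.set → S'' = S' :=
  Finset.mem_filter

theorem stopChildren_congr {S T : DyadicCube d} (h : S.set = T.set) :
    stopChildren μ D f K S = stopChildren μ D f K T := by
  unfold stopChildren StopCond
  congr 1
  simp only [h]

theorem stopFamily_subset : stopFamily μ D f K ⊆ D :=
  Finset.filter_subset _ _

theorem mem_stopFamily_of_mem_stopLayer {T : DyadicCube d} {n : ℕ}
    (h : T ∈ stopLayer μ D f K n) : T ∈ stopFamily μ D f K := by
  refine Finset.mem_filter.2 ⟨?_, n, h⟩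
  cases n with
  | zero => exact (Finset.mem_filter.1 h).1
  | succ n =>
    obtain ⟨R, -, hTR⟩ := Finset.mem_biUnion.1 h
    exact (mem_stopChildren_iff.1 hTR).1

theorem exists_mem_stopChildren_superset {T S : DyadicCube d} (hT : T ∈ stopFamily μ D f K)
    (hS : S ∈ stopFamily μ D f K) (hTS : T.set ⊂ S.set) :
    ∃ S' ∈ stopChildren μ D f K S, T.set ⊆ S'.set := by
  obtain ⟨-, n, hTn⟩ := Finset.mem_filter.1 hT
  cases n with
  | zero =>
    exact absurd ((Finset.mem_filter.1 hTn).2 S (stopFamily_subset hS) hTS.subset) hTS.not_subset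
  | succ n =>
    obtain ⟨R, hRn, hTR⟩ := Finset.mem_biUnion.1 hTn
    have hR : R ∈ stopFamily μ D f K := mem_stopFamily_of_mem_stopLayer hRn
    obtain ⟨-, hTR_ss, -, hTR_max⟩ := mem_stopChildren_iff.1 hTR
    obtain ⟨x, hx⟩ := T.set_nonempty
    rcases DyadicCube.set_subset_or_subset ⟨x, hTR_ss.subset hx, hTS.subset hx⟩ with hRS | hSR
    · rcases hRS.eq_or_ssubset with hRS | hRS
      · exact ⟨T, by rwa [← stopChildren_congr hRS], subset_rfl⟩
      · obtain ⟨S', hS', hRS'⟩ := exists_mem_stopChildren_superset hR hS hRS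
        exact ⟨S', hS', hTR_ss.subset.trans hRS'⟩
    · rcases hSR.eq_or_ssubset with hSR | hSR
      · exact ⟨T, by rwa [stopChildren_congr hSR], subset_rfl⟩
      · -- `S`, hence `T`, would lie in a stopping child of `R` strictly larger than `T`
        obtain ⟨S'', hS'', hSS''⟩ := exists_mem_stopChildren_superset hS hR hSR
        obtain ⟨hS''D, hS''R, hS''stop, -⟩ := mem_stopChildren_iff.1 hS''
        obtain rfl := hTR_max S'' hS''D hS''R hS''stop (hTS.subset.trans hSS'')
        exact absurd hSS'' hTS.not_subset
termination_by (D.filter fun Q => T.set ⊂ Q.set).card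
decreasing_by
  · exact Finset.card_filter_lt_lt_card_filter_lt (F := DyadicCube.set)
      (stopFamily_subset hR) hTR_ss
  · exact Finset.card_filter_lt_lt_card_filter_lt (F := DyadicCube.set)
      (stopFamily_subset hS) hTS

theorem stopFamily_pairwise_disjoint [NeZero d] :
    (stopFamily μ D f K : Set (DyadicCube d)).Pairwise fun S T =>
      Disjoint (S.set \ ⋃ S' ∈ stopChildren μ D f K S, S'.set)
        (T.set \ ⋃ S' ∈ stopChildren μ D f K T, S'.set) := by
  have hcover : ∀ {S T}, S ∈ stopFamily μ D f K → T ∈ stopFamily μ D f K → T ≠ S →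
      T.set ⊆ S.set → T.set ⊆ ⋃ S' ∈ stopChildren μ D f K S, S'.set := by
    intro S T hS hT hTS hsub
    obtain ⟨S', hS', hTS'⟩ := exists_mem_stopChildren_superset hT hS
      (hsub.ssubset_of_ne (DyadicCube.set_injective.ne hTS))
    exact hTS'.trans (subset_biUnion_of_mem (u := DyadicCube.set) hS')
  intro S hS T hT hST
  refine Set.disjoint_left.2 fun x hxS hxT => ?_
  rcases DyadicCube.set_subset_or_subset ⟨x, hxS.1, hxT.1⟩ with h | h
  · exact hxT.2 (hcover hT hS hST h hxS.1)
  · exact hxS.2 (hcover hS hT hST.symm h hxT.1)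

end Stopping

theorem MeasureTheory.measure_setOf_pos_eq_zero {X : Type*} [MeasurableSpace X] {μ : Measure X}
    {F : X → ℝ} (h : ∀ t > 0, μ {x | t < F x} = 0) : μ {x | 0 < F x} = 0 := by
  refine measure_mono_null (fun x (hx : 0 < F x) => ?_) (measure_iUnion_null fun n : ℕ =>
    h (1 / (n + 1)) Nat.one_div_pos_of_nat)
  exact mem_iUnion.2 (exists_nat_one_div_lt hx)

theorem MeasureTheory.measure_le_two_mul_measure_diff {X : Type*} [MeasurableSpace X]
    {μ : Measure X} {s u : Set X} (hs : μ s ≠ ∞) (hu : MeasurableSet u) (h : 2 * μ u ≤ μ s) :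
    μ s ≤ 2 * μ (s \ u) := by
  refine (ENNReal.add_le_add_iff_left hs).1 ?_
  calc μ s + μ s = 2 * μ (s ∩ u) + 2 * μ (s \ u) := by
        rw [← mul_add, measure_inter_add_sdiff _ hu, two_mul]
    _ ≤ 2 * μ u + 2 * μ (s \ u) := by gcongr; exact inter_subset_right
    _ ≤ μ s + 2 * μ (s \ u) := by gcongr

section Average

variable {d : ℕ} {E : Type*} [NormedAddCommGroup E] {μ : Measure (Fin d → ℝ)}
  {A : Set (Fin d → ℝ)} {f : (Fin d → ℝ) → E}

theorem avg_norm_nonneg : 0 ≤ avg μ A fun y => ‖f y‖ :=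
  smul_nonneg (inv_nonneg.2 ENNReal.toReal_nonneg) (integral_nonneg fun _ => norm_nonneg _)

theorem ofReal_avg_norm_mul_measure (hA : μ A ≠ ∞) (hf : IntegrableOn f A μ) :
    ENNReal.ofReal (avg μ A fun y => ‖f y‖) * μ A = ∫⁻ x in A, ‖f x‖ₑ ∂μ := by
  rcases eq_or_ne (μ A) 0 with hA0 | hA0
  · rw [hA0, mul_zero, Measure.restrict_eq_zero.2 hA0, lintegral_zero_measure]
  rw [avg, smul_eq_mul, ENNReal.ofReal_mul (inv_nonneg.2 ENNReal.toReal_nonneg),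
    ofReal_integral_norm_eq_lintegral_enorm hf, ENNReal.ofReal_inv_of_pos
      (ENNReal.toReal_pos hA0 hA), ENNReal.ofReal_toReal hA, mul_right_comm,
    ENNReal.inv_mul_cancel hA0 hA, one_mul]

end Average

section Maximal

variable {d : ℕ} {E : Type*} [NormedAddCommGroup E] [Lattice E] [HasSolidNorm E]
  [IsOrderedAddMonoid E] [NormedSpace ℝ E] {μ : Measure (Fin d → ℝ)} {D : Finset (DyadicCube d)}
  {f : (Fin d → ℝ) → E} {K : ℝ}

theorem indicator_avg_le_dyadicMaximal {g : (Fin d → ℝ) → E} {Q : DyadicCube d} (hQ : Q ∈ D)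
    (x : Fin d → ℝ) :
    Q.set.indicator (fun _ => avg μ Q.set fun y => |g y|) x ≤ dyadicMaximal μ D g x :=
  Finset.le_fold_sup_of_mem
    (g := fun Q => Q.set.indicator (fun _ => avg μ Q.set fun y => |g y|) x) hQ

theorem supAvgOver_le_dyadicMaximal (hf : ∀ x, 0 ≤ f x) {P : DyadicCube d → Prop}
    {A : Set (Fin d → ℝ)} {x : Fin d → ℝ} (hP : ∀ Q, P Q → x ∈ Q.set ∧ Q.set ⊆ A) :
    supAvgOver μ D f P ≤ dyadicMaximal μ D (A.indicator f) x := by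
  refine Finset.fold_sup_le_iff.2 ⟨Finset.le_fold_sup, fun Q hQ => ?_⟩
  obtain ⟨hQD, hxQ, hQA⟩ := (Finset.mem_filter.1 hQ).imp_right (hP Q)
  calc avg μ Q.set f
      = Q.set.indicator (fun _ => avg μ Q.set fun y => |A.indicator f y|) x := by
        rw [indicator_of_mem hxQ, avg, avg]
        congr 1
        refine setIntegral_congr_fun Q.measurableSet_set fun y hy => ?_
        rw [indicator_of_mem (hQA hy), abs_of_nonneg (hf y)]
    _ ≤ dyadicMaximal μ D (A.indicator f) x := indicator_avg_le_dyadicMaximal hQD x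

theorem lt_norm_dyadicMaximal_of_mem_stopChildren (hf : ∀ x, 0 ≤ f x) {S S' : DyadicCube d}
    (hS' : S' ∈ stopChildren μ D f K S) {x : Fin d → ℝ} (hx : x ∈ S'.set) :
    2 * K * avg μ S.set (fun y => ‖f y‖) < ‖dyadicMaximal μ D (S.set.indicator f) x‖ := by
  refine (mem_stopChildren_iff.1 hS').2.2.1.trans_le (norm_le_norm_of_abs_le_abs ?_)
  have hsup := supAvgOver_le_dyadicMaximal (μ := μ) (D := D) hf
    (P := fun Q => S'.set ⊆ Q.set ∧ Q.set ⊆ S.set) (x := x) fun Q hQ => ⟨hQ.1 hx, hQ.2⟩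
  have hsup_nonneg : 0 ≤ supAvgOver μ D f fun Q => S'.set ⊆ Q.set ∧ Q.set ⊆ S.set :=
    Finset.le_fold_sup
  rwa [abs_of_nonneg hsup_nonneg, abs_of_nonneg (hsup_nonneg.trans hsup)]

end Maximal

section Sparse

variable {d : ℕ} {E : Type*} [NormedAddCommGroup E] [Lattice E] [HasSolidNorm E]
  [IsOrderedAddMonoid E] [NormedSpace ℝ E] {μ : Measure (Fin d → ℝ)} [IsLocallyFiniteMeasure μ]
  {D : Finset (DyadicCube d)} {f : (Fin d → ℝ) → E} {K : ℝ}

theorem two_mul_measure_iUnion_stopChildren_le (hfpos : ∀ x, 0 ≤ f x)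
    (hf : LocallyIntegrable f μ) (hK0 : 0 ≤ K)
    (hKweak : ∀ g : (Fin d → ℝ) → E, Integrable g μ → ∀ lam : ℝ, 0 < lam →
      ENNReal.ofReal lam * μ {x | lam < ‖dyadicMaximal μ D g x‖} ≤
        ENNReal.ofReal K * ∫⁻ x, ‖g x‖₊ ∂μ)
    (S : DyadicCube d) :
    2 * μ (⋃ S' ∈ stopChildren μ D f K S, S'.set) ≤ μ S.set := by
  set g := S.set.indicator f
  set lam := 2 * K * avg μ S.set (fun y => ‖f y‖) with hlam_def
  have hfS : IntegrableOn f S.set μ :=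
    (hf.integrableOn_isCompact S.isBounded_set.isCompact_closure).mono_set subset_closure
  have hweak := hKweak g ((integrable_indicator_iff S.measurableSet_set).2 hfS)
  have hmass : ENNReal.ofReal lam * μ S.set = 2 * (ENNReal.ofReal K * ∫⁻ x, ‖g x‖₊ ∂μ) := by
    simp only [g, ← enorm_eq_nnnorm, enorm_indicator_eq_indicator_enorm,
      lintegral_indicator S.measurableSet_set]
    rw [← ofReal_avg_norm_mul_measure (S.measure_set_lt_top μ).ne hfS, hlam_def,
      ENNReal.ofReal_mul (by positivity), ENNReal.ofReal_mul zero_le_two, ENNReal.ofReal_ofNat]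
    ring
  have hU : ⋃ S' ∈ stopChildren μ D f K S, S'.set ⊆ {x | lam < ‖dyadicMaximal μ D g x‖} :=
    iUnion₂_subset fun S' hS' x hx => lt_norm_dyadicMaximal_of_mem_stopChildren hfpos hS' hx
  rcases (by positivity [avg_norm_nonneg (μ := μ) (A := S.set) (f := f)] : 0 ≤ lam).eq_or_lt
    with hlam | hlam
  · -- `K = 0` or `f = 0` on `S`: the weak-type bound forces `M̃^μ_D (1_S f) = 0` a.e.
    have hc : ENNReal.ofReal K * ∫⁻ x, ‖g x‖₊ ∂μ = 0 := by simpa [← hlam] using hmass.symm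
    have hnull : μ {x | 0 < ‖dyadicMaximal μ D g x‖} = 0 := by
      refine measure_setOf_pos_eq_zero fun t ht => ?_
      have := hweak t ht
      rw [hc, nonpos_iff_eq_zero, mul_eq_zero] at this
      exact this.resolve_left (ENNReal.ofReal_pos.2 ht).ne'
    simp [measure_mono_null (hlam ▸ hU) hnull]
  · refine (ENNReal.mul_le_mul_iff_right (ENNReal.ofReal_pos.2 hlam).ne'
      ENNReal.ofReal_ne_top).1 ?_
    calc ENNReal.ofReal lam * (2 * μ (⋃ S' ∈ stopChildren μ D f K S, S'.set))
        = 2 * (ENNReal.ofReal lam * μ (⋃ S' ∈ stopChildren μ D f K S, S'.set)) := by ring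
      _ ≤ 2 * (ENNReal.ofReal K * ∫⁻ x, ‖g x‖₊ ∂μ) := by
        gcongr 2 * ?_
        exact le_trans (by gcongr) (hweak lam hlam)
      _ = ENNReal.ofReal lam * μ S.set := hmass.symm

end Sparse

theorem stopFamily_isSparse_general
    {d : ℕ} (hd : 1 ≤ d)
    (E : Type*) [NormedAddCommGroup E] [Lattice E] [HasSolidNorm E] [IsOrderedAddMonoid E] [NormedSpace ℝ E]
    (μ : Measure (Fin d → ℝ)) [IsLocallyFiniteMeasure μ]
    (D : Finset (DyadicCube d)) (f : (Fin d → ℝ) → E)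
    (hfpos : ∀ x, 0 ≤ f x) (hf : LocallyIntegrable f μ)
    (K : ℝ) (hK0 : 0 ≤ K)
    (hKweak : ∀ g : (Fin d → ℝ) → E, Integrable g μ → ∀ lam : ℝ, 0 < lam →
      ENNReal.ofReal lam * μ {x | lam < ‖dyadicMaximal μ D g x‖} ≤
        ENNReal.ofReal K * ∫⁻ x, ‖g x‖₊ ∂μ) :
    (∀ S ∈ stopFamily μ D f K,
      μ S.set ≤ 2 * μ (S.set \ ⋃ S' ∈ stopChildren μ D f K S, DyadicCube.set S')) ∧
    (stopFamily μ D f K : Set (DyadicCube d)).Pairwise (fun S T =>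
      Disjoint (S.set \ ⋃ S' ∈ stopChildren μ D f K S, DyadicCube.set S')
        (T.set \ ⋃ S' ∈ stopChildren μ D f K T, DyadicCube.set S')) := by
  have : NeZero d := ⟨by omega⟩
  refine ⟨fun S _ => ?_, stopFamily_pairwise_disjoint⟩
  exact measure_le_two_mul_measure_diff (S.measure_set_lt_top μ).ne
    ((stopChildren μ D f K S).measurableSet_biUnion fun Q _ => Q.measurableSet_set)
    (two_mul_measure_iUnion_stopChildren_le hfpos hf hK0 hKweak S)

/-- from the proof of Theorem 1.4: the stopping family is sparse.
Let `K` be the `L^1(μ;E) → L^{1,∞}(μ;E)` norm of the dyadic lattice maximal operator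
`M̃^μ_D` (i.e. the least constant satisfying the weak-type `(1,1)` inequality), and let
`𝒮 = stopFamily μ D f K` be generated from the maximal cubes of `D` by iterating the
stopping condition `‖sup_{Q ∈ D, S' ⊆ Q ⊆ S} ⟨f⟩^μ_Q‖ > 2K ⟨‖f‖⟩^μ_S`. Then `𝒮` is sparse:
the sets `E_S = S \ ⋃_{S' ∈ ch(S)} S'` satisfy `μ(E_S) ≥ μ(S)/2` and are pairwise
disjoint. -/
theorem stopFamily_isSparse
    {d : ℕ} (hd : 1 ≤ d)
    (E : Type*) [NormedAddCommGroup E] [Lattice E] [HasSolidNorm E] [IsOrderedAddMonoid E] [NormedSpace ℝ E] [CompleteSpace E]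
    (μ : Measure (Fin d → ℝ)) [IsLocallyFiniteMeasure μ]
    (D : Finset (DyadicCube d)) (f : (Fin d → ℝ) → E)
    (hfpos : ∀ x, 0 ≤ f x) (hf : LocallyIntegrable f μ)
    (K : ℝ) (hK0 : 0 ≤ K)
    (hKweak : ∀ g : (Fin d → ℝ) → E, Integrable g μ → ∀ lam : ℝ, 0 < lam →
      ENNReal.ofReal lam * μ {x | lam < ‖dyadicMaximal μ D g x‖} ≤
        ENNReal.ofReal K * ∫⁻ x, ‖g x‖₊ ∂μ)
    (hKmin : ∀ K' : ℝ, 0 ≤ K' →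
      (∀ g : (Fin d → ℝ) → E, Integrable g μ → ∀ lam : ℝ, 0 < lam →
        ENNReal.ofReal lam * μ {x | lam < ‖dyadicMaximal μ D g x‖} ≤
          ENNReal.ofReal K' * ∫⁻ x, ‖g x‖₊ ∂μ) → K ≤ K') :
    (∀ S ∈ stopFamily μ D f K,
      μ S.set ≤ 2 * μ (S.set \ ⋃ S' ∈ stopChildren μ D f K S, DyadicCube.set S')) ∧
    (stopFamily μ D f K : Set (DyadicCube d)).Pairwise (fun S T =>
      Disjoint (S.set \ ⋃ S' ∈ stopChildren μ D f K S, DyadicCube.set S')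
        (T.set \ ⋃ S' ∈ stopChildren μ D f K T, DyadicCube.set S')) :=
  stopFamily_isSparse_general hd E μ D f hfpos hf K hK0 hKweak
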